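/- arXiv:1006.4417 — 2 statements merged into one kernel-verified Lean document; each statement's English description precedes it below -/
import Mathlib

section
/- Suppose α² + β² = γ² with α, β, γ > 0, and let Z_0, Z_1 be cylinder functions with fixed coefficients. Define P(x) = (2αβ)^{−1}[γx·Z_1(γx)Z_0(αx)Z_0(βx) − αx·Z_1(αx)Z_0(βx)Z_0(γx) − βx·Z_1(βx)Z_0(γx)Z_0(αx)]. Then P'(x) = x·Z_1(αx)·Z_1(βx)·Z_0(γx) for all x > 0. -/
/-!
Differentiating the three products with `Z₀' = -Z₁` and `(t Z₁(t))' = t Z₀(t)` (rescaled by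
`δ`) produces two kinds of terms. The terms `δ² x Z₀(αx) Z₀(βx) Z₀(γx)` appear with total
coefficient `γ² - α² - β² = 0`, and of the six mixed terms `x Z₁ Z₁ Z₀` four cancel in pairs,
leaving `2αβ x Z₁(αx) Z₁(βx) Z₀(γx)`.
-/

theorem HasDerivAt.comp_const_mul {𝕜 : Type*} [NontriviallyNormedField 𝕜] {f : 𝕜 → 𝕜}
    {f' δ x : 𝕜} (hf : HasDerivAt f f' (δ * x)) :
    HasDerivAt (fun y => f (δ * y)) (f' * δ) x :=
  hf.comp x (hasDerivAt_const_mul δ)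

section Cylinder

variable {Z0 Z1 : ℝ → ℝ} {δ x : ℝ}

theorem hasDerivAt_cylinder_zero_comp_mul
    (h0 : ∀ t : ℝ, t ≠ 0 → HasDerivAt Z0 (-Z1 t) t) (hδx : δ * x ≠ 0) :
    HasDerivAt (fun y => Z0 (δ * y)) (-Z1 (δ * x) * δ) x :=
  (h0 _ hδx).comp_const_mul

theorem hasDerivAt_mul_cylinder_one_comp_mul
    (h1 : ∀ t : ℝ, t ≠ 0 → HasDerivAt Z1 (Z0 t - Z1 t / t) t) (hδx : δ * x ≠ 0) :
    HasDerivAt (fun y => δ * y * Z1 (δ * y)) (δ ^ 2 * x * Z0 (δ * x)) x := by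
  obtain ⟨hδ, hx⟩ := mul_ne_zero_iff.mp hδx
  have h := (hasDerivAt_const_mul δ).fun_mul (h1 _ hδx).comp_const_mul
  refine h.congr_deriv ?_
  field_simp
  ring

theorem hasDerivAt_cylinder_triple_product
    (h0 : ∀ t : ℝ, t ≠ 0 → HasDerivAt Z0 (-Z1 t) t)
    (h1 : ∀ t : ℝ, t ≠ 0 → HasDerivAt Z1 (Z0 t - Z1 t / t) t) {ε ζ : ℝ}
    (hδx : δ * x ≠ 0) (hεx : ε * x ≠ 0) (hζx : ζ * x ≠ 0) :
    HasDerivAt (fun y => δ * y * Z1 (δ * y) * Z0 (ε * y) * Z0 (ζ * y))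
      (δ ^ 2 * x * Z0 (δ * x) * Z0 (ε * x) * Z0 (ζ * x)
        - δ * x * Z1 (δ * x) * (ε * Z1 (ε * x) * Z0 (ζ * x) + ζ * Z0 (ε * x) * Z1 (ζ * x))) x := by
  have h := ((hasDerivAt_mul_cylinder_one_comp_mul h1 hδx).fun_mul
    (hasDerivAt_cylinder_zero_comp_mul h0 hεx)).fun_mul (hasDerivAt_cylinder_zero_comp_mul h0 hζx)
  exact h.congr_deriv (by ring)

end Cylinder

theorem cylinder_pythagorean_antideriv_general
    (Z0 Z1 : ℝ → ℝ)
    (h0 : ∀ t : ℝ, t ≠ 0 → HasDerivAt Z0 (-Z1 t) t)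
    (h1 : ∀ t : ℝ, t ≠ 0 → HasDerivAt Z1 (Z0 t - Z1 t / t) t)
    (α β γ : ℝ) (hα : 0 < α) (hβ : 0 < β) (hpyth : α ^ 2 + β ^ 2 = γ ^ 2) :
    ∀ x : ℝ, 0 < x →
      HasDerivAt (fun y => (2 * α * β)⁻¹ *
          (γ * y * Z1 (γ * y) * Z0 (α * y) * Z0 (β * y)
            - α * y * Z1 (α * y) * Z0 (β * y) * Z0 (γ * y)
            - β * y * Z1 (β * y) * Z0 (γ * y) * Z0 (α * y)))
        (x * Z1 (α * x) * Z1 (β * x) * Z0 (γ * x)) x := by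
  intro x hx
  have hγ : γ ≠ 0 := by
    rintro rfl
    nlinarith [mul_pos hα hα, mul_pos hβ hβ]
  have hαx : α * x ≠ 0 := mul_ne_zero hα.ne' hx.ne'
  have hβx : β * x ≠ 0 := mul_ne_zero hβ.ne' hx.ne'
  have hγx : γ * x ≠ 0 := mul_ne_zero hγ hx.ne'
  have h := (((hasDerivAt_cylinder_triple_product h0 h1 hγx hαx hβx).fun_sub
    (hasDerivAt_cylinder_triple_product h0 h1 hαx hβx hγx)).fun_sub
    (hasDerivAt_cylinder_triple_product h0 h1 hβx hγx hαx)).const_mul (2 * α * β)⁻¹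
  refine h.congr_deriv ?_
  rw [inv_mul_eq_iff_eq_mul₀ (by positivity)]
  linear_combination -x * Z0 (α * x) * Z0 (β * x) * Z0 (γ * x) * hpyth

/-- `Z₀, Z₁` are cylinder functions of orders 0 and 1 with the same
coefficients, characterized by `Z₀' = -Z₁` and `Z₁'(t) = Z₀(t) - Z₁(t)/t`. -/
theorem cylinder_pythagorean_antideriv
    (Z0 Z1 : ℝ → ℝ)
    (h0 : ∀ t : ℝ, t ≠ 0 → HasDerivAt Z0 (-Z1 t) t)
    (h1 : ∀ t : ℝ, t ≠ 0 → HasDerivAt Z1 (Z0 t - Z1 t / t) t)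
    (α β γ : ℝ) (hα : 0 < α) (hβ : 0 < β) (hγ : 0 < γ) (hpyth : α ^ 2 + β ^ 2 = γ ^ 2) :
    ∀ x : ℝ, 0 < x →
      HasDerivAt (fun y => (2 * α * β)⁻¹ *
          (γ * y * Z1 (γ * y) * Z0 (α * y) * Z0 (β * y)
            - α * y * Z1 (α * y) * Z0 (β * y) * Z0 (γ * y)
            - β * y * Z1 (β * y) * Z0 (γ * y) * Z0 (α * y)))
        (x * Z1 (α * x) * Z1 (β * x) * Z0 (γ * x)) x :=
  cylinder_pythagorean_antideriv_general Z0 Z1 h0 h1 α β γ hα hβ hpyth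
end

section
/- Let q ∈ {0, 1} and let j_{q,m}, j_{q,n}, j_{q,p} be positive zeros of the Bessel function J_q. Define C_{000} = ∫₀¹ x·J_0(j_{q,m}x)·J_0(j_{q,n}x)·J_0(j_{q,p}x) dx and C_{110} = ∫₀¹ x·J_1(j_{q,m}x)·J_1(j_{q,n}x)·J_0(j_{q,p}x) dx. If q = 1 (so J_1 vanishes at all three parameters), then C_{110} = C_{000}·(j_{1,m}² + j_{1,n}² − j_{1,p}²)/(2·j_{1,m}·j_{1,n}). -/
/-!
Put `P_a(x) = a x J₁(a x)`, so that `P_a' = a² x J₀(a x)` and `(J₀(a x))' = -a J₁(a x)`. The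
antiderivative `F = P_c J₀(a x) J₀(b x) - P_a J₀(b x) J₀(c x) - P_b J₀(a x) J₀(c x)` has
`F' = 2ab · x J₁(a x) J₁(b x) J₀(c x) - (a² + b² - c²) · x J₀(a x) J₀(b x) J₀(c x)`,
and `F` vanishes at `0` trivially and at `1` because `J₁(a) = J₁(b) = J₁(c) = 0`.
The only analytic subtlety is integrability: `J₁ = -J₀'` is continuous, since away from `0` it is
`(s J₁(s)) / s`, and at `0` a derivative cannot jump.
-/

theorem dslope_mul_self_of_ne {𝕜 : Type*} [NontriviallyNormedField 𝕜] (f : 𝕜 → 𝕜) {x : 𝕜}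
    (hx : x ≠ 0) : dslope (fun s => s * f s) 0 x = f x := by
  rw [dslope_of_ne _ hx, slope_def_field]
  field_simp
  ring

theorem Differentiable.continuous_dslope {𝕜 E : Type*} [NontriviallyNormedField 𝕜]
    [NormedAddCommGroup E] [NormedSpace 𝕜 E] {g : 𝕜 → E} (hg : Differentiable 𝕜 g) (a : 𝕜) :
    Continuous (dslope g a) := by
  rw [← continuousOn_univ, continuousOn_dslope Filter.univ_mem]
  exact ⟨hg.continuous.continuousOn, hg a⟩

theorem eq_dslope_mul_self_of_hasDerivAt {f f' : ℝ → ℝ} (hf : ∀ t, HasDerivAt f (f' t) t)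
    (hg : Differentiable ℝ fun s => s * f' s) : f' = dslope (fun s => s * f' s) 0 := by
  funext x
  rcases eq_or_ne x 0 with rfl | hx
  · exact (hf 0).unique <| hasDerivAt_of_hasDerivAt_of_ne
      (fun y hy => by simpa only [dslope_mul_self_of_ne f' hy] using hf y)
      (hf 0).continuousAt (hg.continuous_dslope 0).continuousAt
  · exact (dslope_mul_self_of_ne f' hx).symm

namespace Bessel

variable {J0 J1 : ℝ → ℝ}

theorem J1_eq_dslope (h0 : ∀ t, HasDerivAt J0 (-J1 t) t)
    (h1 : ∀ t, HasDerivAt (fun s => s * J1 s) (t * J0 t) t) :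
    J1 = dslope (fun s => s * J1 s) 0 :=
  eq_dslope_mul_self_of_hasDerivAt (f := -J0) (fun t => by simpa using (h0 t).neg)
    fun t => (h1 t).differentiableAt

theorem continuous_J1 (h0 : ∀ t, HasDerivAt J0 (-J1 t) t)
    (h1 : ∀ t, HasDerivAt (fun s => s * J1 s) (t * J0 t) t) : Continuous J1 := by
  rw [J1_eq_dslope h0 h1]
  exact Differentiable.continuous_dslope (fun t => (h1 t).differentiableAt) 0

theorem J1_zero (h0 : ∀ t, HasDerivAt J0 (-J1 t) t)
    (h1 : ∀ t, HasDerivAt (fun s => s * J1 s) (t * J0 t) t) : J1 0 = 0 := by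
  rw [J1_eq_dslope h0 h1, dslope_same, (h1 0).deriv, zero_mul]

theorem hasDerivAt_J0_comp_mul (h0 : ∀ t, HasDerivAt J0 (-J1 t) t) (a x : ℝ) :
    HasDerivAt (fun y => J0 (a * y)) (-(a * J1 (a * x))) x :=
  ((h0 (a * x)).comp x ((hasDerivAt_id x).const_mul a)).congr_deriv (by ring)

theorem hasDerivAt_mul_J1_comp_mul (h1 : ∀ t, HasDerivAt (fun s => s * J1 s) (t * J0 t) t)
    (a x : ℝ) : HasDerivAt (fun y => a * y * J1 (a * y)) (a ^ 2 * x * J0 (a * x)) x :=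
  ((h1 (a * x)).comp x ((hasDerivAt_id x).const_mul a)).congr_deriv (by ring)

def tripleAntideriv (J0 J1 : ℝ → ℝ) (a b c x : ℝ) : ℝ :=
  c * x * J1 (c * x) * J0 (a * x) * J0 (b * x) - a * x * J1 (a * x) * J0 (b * x) * J0 (c * x)
    - b * x * J1 (b * x) * J0 (a * x) * J0 (c * x)

theorem hasDerivAt_tripleAntideriv (h0 : ∀ t, HasDerivAt J0 (-J1 t) t)
    (h1 : ∀ t, HasDerivAt (fun s => s * J1 s) (t * J0 t) t) (a b c x : ℝ) :
    HasDerivAt (tripleAntideriv J0 J1 a b c)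
      (2 * a * b * (x * J1 (a * x) * J1 (b * x) * J0 (c * x))
        - (a ^ 2 + b ^ 2 - c ^ 2) * (x * J0 (a * x) * J0 (b * x) * J0 (c * x))) x := by
  have P := hasDerivAt_mul_J1_comp_mul h1 (x := x)
  have Q := hasDerivAt_J0_comp_mul h0 (x := x)
  exact ((((P c).mul (Q a)).mul (Q b)).sub (((P a).mul (Q b)).mul (Q c)) |>.sub
    (((P b).mul (Q a)).mul (Q c))).congr_deriv (by simp only [Pi.mul_apply]; ring)

theorem tripleAntideriv_zero (a b c : ℝ) : tripleAntideriv J0 J1 a b c 0 = 0 := by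
  simp [tripleAntideriv]

theorem tripleAntideriv_one {a b c : ℝ} (ha : J1 a = 0) (hb : J1 b = 0) (hc : J1 c = 0) :
    tripleAntideriv J0 J1 a b c 1 = 0 := by
  simp [tripleAntideriv, ha, hb, hc]

theorem two_mul_mul_integral_J1_J1_J0 (h0 : ∀ t, HasDerivAt J0 (-J1 t) t)
    (h1 : ∀ t, HasDerivAt (fun s => s * J1 s) (t * J0 t) t) {a b c : ℝ}
    (ha : J1 a = 0) (hb : J1 b = 0) (hc : J1 c = 0) :
    2 * a * b * ∫ x in (0 : ℝ)..1, x * J1 (a * x) * J1 (b * x) * J0 (c * x)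
      = (a ^ 2 + b ^ 2 - c ^ 2) * ∫ x in (0 : ℝ)..1, x * J0 (a * x) * J0 (b * x) * J0 (c * x) := by
  have hJ0 : Continuous J0 := continuous_iff_continuousAt.2 fun t => (h0 t).continuousAt
  have hJ1 := continuous_J1 h0 h1
  have int110 : IntervalIntegrable (fun x => x * J1 (a * x) * J1 (b * x) * J0 (c * x))
      MeasureTheory.volume 0 1 := by
    apply Continuous.intervalIntegrable; fun_prop
  have int000 : IntervalIntegrable (fun x => x * J0 (a * x) * J0 (b * x) * J0 (c * x))
      MeasureTheory.volume 0 1 := by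
    apply Continuous.intervalIntegrable; fun_prop
  have ftc := intervalIntegral.integral_eq_sub_of_hasDerivAt
    (fun x _ => hasDerivAt_tripleAntideriv h0 h1 a b c x)
    ((int110.const_mul _).sub (int000.const_mul _))
  rw [intervalIntegral.integral_sub (int110.const_mul _) (int000.const_mul _),
    intervalIntegral.integral_const_mul, intervalIntegral.integral_const_mul,
    tripleAntideriv_one ha hb hc, tripleAntideriv_zero, sub_zero] at ftc
  exact sub_eq_zero.1 ftc

end Bessel

theorem bessel_triple_product_C110_eq_general
    (J0 J1 : ℝ → ℝ)
    (h0 : ∀ t : ℝ, HasDerivAt J0 (-J1 t) t)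
    (h1 : ∀ t : ℝ, HasDerivAt (fun s => s * J1 s) (t * J0 t) t)
    (jm jn jp : ℝ)
    (hzm : J1 jm = 0) (hzn : J1 jn = 0) (hzp : J1 jp = 0) :
    ∫ x in (0:ℝ)..1, x * J1 (jm * x) * J1 (jn * x) * J0 (jp * x)
      = (∫ x in (0:ℝ)..1, x * J0 (jm * x) * J0 (jn * x) * J0 (jp * x))
        * ((jm ^ 2 + jn ^ 2 - jp ^ 2) / (2 * jm * jn)) := by
  -- for `jm = 0` or `jn = 0` the right side is `0` through `x / 0 = 0`, and so is the integrand
  rcases eq_or_ne jm 0 with rfl | hm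
  · simp [Bessel.J1_zero h0 h1]
  rcases eq_or_ne jn 0 with rfl | hn
  · simp [Bessel.J1_zero h0 h1]
  rw [mul_div_assoc', eq_div_iff (by positivity), mul_comm _ (_ - _),
    ← Bessel.two_mul_mul_integral_J1_J1_J0 h0 h1 hzm hzn hzp]
  ring

/-- For `J₀, J₁` the Bessel functions of the first kind of orders 0 and 1
(characterized by `J₀' = -J₁` and `(x J₁)' = x J₀`), and `jm, jn, jp` positive
zeros of `J₁`, the triple-product integrals satisfy
`C₁₁₀ = C₀₀₀ (jm² + jn² - jp²)/(2 jm jn)`. -/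
theorem bessel_triple_product_C110_eq
    (J0 J1 : ℝ → ℝ)
    (h0 : ∀ t : ℝ, HasDerivAt J0 (-J1 t) t)
    (h1 : ∀ t : ℝ, HasDerivAt (fun s => s * J1 s) (t * J0 t) t)
    (jm jn jp : ℝ) (hm : 0 < jm) (hn : 0 < jn) (hp : 0 < jp)
    (hzm : J1 jm = 0) (hzn : J1 jn = 0) (hzp : J1 jp = 0) :
    ∫ x in (0:ℝ)..1, x * J1 (jm * x) * J1 (jn * x) * J0 (jp * x)
      = (∫ x in (0:ℝ)..1, x * J0 (jm * x) * J0 (jn * x) * J0 (jp * x))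
        * ((jm ^ 2 + jn ^ 2 - jp ^ 2) / (2 * jm * jn)) :=
  bessel_triple_product_C110_eq_general J0 J1 h0 h1 jm jn jp hzm hzn hzp
end
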